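/- Let m ≥ 1, ℂ^{2m} = ℂ^m ⊕ ℂ^m, Q an orthogonal projection on ℂ^{2m}, and M_sy, M_asy the symmetric and antisymmetric diagonal subspaces. Then dim((ker Q)^⊥ ∩ M_asy) + dim(ker Q ∩ M_asy) = dim((ker Q)^⊥ ∩ M_sy) + dim(ker Q ∩ M_sy). -/

import Mathlib

open Matrix

/-- The linear embedding c ↦ (c,c). -/
def symMap (m : ℕ) : (Fin m → ℂ) →ₗ[ℂ] (Fin m ⊕ Fin m → ℂ) where
  toFun c := Sum.elim c c
  map_add' x y := by funext i; cases i <;> simp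
  map_smul' r x := by funext i; cases i <;> simp

/-- The linear embedding c ↦ (c,−c). -/
def asymMap (m : ℕ) : (Fin m → ℂ) →ₗ[ℂ] (Fin m ⊕ Fin m → ℂ) where
  toFun c := Sum.elim c (-c)
  map_add' x y := by funext i; cases i <;> simp [add_comm]
  map_smul' r x := by funext i; cases i <;> simp

/-- The symmetric subspace M_sy = {(c,c)}. -/
noncomputable def Msy (m : ℕ) : Submodule ℂ (Fin m ⊕ Fin m → ℂ) := LinearMap.range (symMap m)

/-- The antisymmetric subspace M_asy = {(c,−c)}. -/
noncomputable def Masy (m : ℕ) : Submodule ℂ (Fin m ⊕ Fin m → ℂ) := LinearMap.range (asymMap m)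

/-!
Since `Q` is Hermitian, `ker Q = (ran Q)ᗮ`, and `M_asy = M_syᗮ`. For subspaces `R`, `S` of a
finite-dimensional inner product space, `R ⊓ Sᗮ = (Rᗮ ⊔ S)ᗮ` and the dimension formula
for sums give `dim (R ⊓ Sᗮ) + dim S = dim (Rᗮ ⊓ S) + dim R`. Add this identity for `R = ran Q`
to the same identity for `Rᗮ = ker Q` in place of `R`: since `dim R + dim Rᗮ = dim S + dim Sᗮ` and
`dim M_sy = dim M_asy = m`, what remains is the claim.
-/

open Module

namespace Submodule

variable {𝕜 E : Type*} [RCLike 𝕜] [NormedAddCommGroup E] [InnerProductSpace 𝕜 E]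
  [FiniteDimensional 𝕜 E]

theorem finrank_inf_orthogonal_add_finrank (R S : Submodule 𝕜 E) :
    finrank 𝕜 ↥(R ⊓ Sᗮ) + finrank 𝕜 S =
      finrank 𝕜 ↥(Rᗮ ⊓ S) + finrank 𝕜 R := by
  have hsup := (Rᗮ ⊔ S).finrank_add_finrank_orthogonal
  rw [← inf_orthogonal, orthogonal_orthogonal] at hsup
  have hR := R.finrank_add_finrank_orthogonal
  have hdim := finrank_sup_add_finrank_inf_eq Rᗮ S
  omega

theorem finrank_inf_orthogonal_add_finrank_orthogonal_inf_orthogonal (R S : Submodule 𝕜 E) :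
    finrank 𝕜 ↥(R ⊓ Sᗮ) + finrank 𝕜 ↥(Rᗮ ⊓ Sᗮ) + finrank 𝕜 S =
      finrank 𝕜 ↥(R ⊓ S) + finrank 𝕜 ↥(Rᗮ ⊓ S) + finrank 𝕜 Sᗮ := by
  have hR := R.finrank_inf_orthogonal_add_finrank S
  have hRperp := Rᗮ.finrank_inf_orthogonal_add_finrank S
  rw [orthogonal_orthogonal] at hRperp
  have hRdim := R.finrank_add_finrank_orthogonal
  have hSdim := S.finrank_add_finrank_orthogonal
  omega

end Submodule

namespace LinearEquiv

variable {R M N : Type*} [CommRing R] [AddCommGroup M] [Module R M] [AddCommGroup N] [Module R N]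

theorem range_conj (e : M ≃ₗ[R] N) (f : Module.End R M) :
    LinearMap.range (e.conj f) = (LinearMap.range f).map e.toLinearMap := by
  rw [conj_apply, LinearMap.range_comp, LinearEquiv.range, Submodule.map_top, LinearMap.range_comp]

theorem ker_conj (e : M ≃ₗ[R] N) (f : Module.End R M) :
    LinearMap.ker (e.conj f) = (LinearMap.ker f).map e.toLinearMap := by
  rw [conj_apply, LinearMap.ker_comp, ker_comp, Submodule.map_equiv_eq_comap_symm]

theorem finrank_map_inf_map (e : M ≃ₗ[R] N) (p q : Submodule R M) :
    finrank R ↥(p.map e.toLinearMap ⊓ q.map e.toLinearMap) = finrank R ↥(p ⊓ q) := by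
  rw [← Submodule.map_inf _ e.injective, finrank_map_eq]

end LinearEquiv

-- `ι → 𝕜` carries the sup norm; orthogonal complements live in `EuclideanSpace 𝕜 ι`.
noncomputable abbrev euclideanEquiv (𝕜 ι : Type*) [RCLike 𝕜] :
    (ι → 𝕜) ≃ₗ[𝕜] EuclideanSpace 𝕜 ι :=
  (WithLp.linearEquiv 2 𝕜 (ι → 𝕜)).symm

namespace Matrix

variable {𝕜 ι : Type*} [RCLike 𝕜] [Fintype ι] [DecidableEq ι]

theorem IsHermitian.map_ker_mulVecLin {Q : Matrix ι ι 𝕜} (hQ : Q.IsHermitian) :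
    (LinearMap.ker Q.mulVecLin).map (euclideanEquiv 𝕜 ι).toLinearMap =
      ((LinearMap.range Q.mulVecLin).map (euclideanEquiv 𝕜 ι).toLinearMap)ᗮ := by
  rw [← LinearEquiv.ker_conj, ← LinearEquiv.range_conj]
  exact (isSymmetric_toEuclideanLin_iff.mpr hQ).orthogonal_range.symm

end Matrix

theorem finrank_Msy (m : ℕ) : finrank ℂ (Msy m) = m := by
  rw [Msy, LinearMap.finrank_range_of_inj, finrank_fin_fun]
  exact fun a b h ↦ funext fun i ↦ congrFun h (Sum.inl i)

theorem finrank_Masy (m : ℕ) : finrank ℂ (Masy m) = m := by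
  rw [Masy, LinearMap.finrank_range_of_inj, finrank_fin_fun]
  exact fun a b h ↦ funext fun i ↦ congrFun h (Sum.inl i)

theorem map_Masy_eq_orthogonal (m : ℕ) :
    (Masy m).map (euclideanEquiv ℂ _).toLinearMap =
      ((Msy m).map (euclideanEquiv ℂ _).toLinearMap)ᗮ := by
  apply Submodule.eq_of_le_of_finrank_eq
  · rintro _ ⟨_, ⟨c, rfl⟩, rfl⟩
    rw [Submodule.mem_orthogonal]
    rintro _ ⟨_, ⟨d, rfl⟩, rfl⟩
    simp [PiLp.inner_apply, Fintype.sum_sum_type, symMap, asymMap]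
  · have h := ((Msy m).map (euclideanEquiv ℂ _).toLinearMap).finrank_add_finrank_orthogonal
    simp only [LinearEquiv.finrank_map_eq, finrank_Msy, finrank_Masy, finrank_euclideanSpace,
      Fintype.card_sum, Fintype.card_fin] at h ⊢
    omega

theorem stmt6_general {m : ℕ} (Q : Matrix (Fin m ⊕ Fin m) (Fin m ⊕ Fin m) ℂ)
    (hQ : Qᴴ = Q) :
    Module.finrank ℂ ↥(LinearMap.range Q.mulVecLin ⊓ Masy m) +
      Module.finrank ℂ ↥(LinearMap.ker Q.mulVecLin ⊓ Masy m) =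
    Module.finrank ℂ ↥(LinearMap.range Q.mulVecLin ⊓ Msy m) +
      Module.finrank ℂ ↥(LinearMap.ker Q.mulVecLin ⊓ Msy m) := by
  have key := Submodule.finrank_inf_orthogonal_add_finrank_orthogonal_inf_orthogonal
    ((LinearMap.range Q.mulVecLin).map (euclideanEquiv ℂ _).toLinearMap)
    ((Msy m).map (euclideanEquiv ℂ _).toLinearMap)
  rw [← IsHermitian.map_ker_mulVecLin hQ, ← map_Masy_eq_orthogonal,
    LinearEquiv.finrank_map_eq, LinearEquiv.finrank_map_eq, finrank_Msy, finrank_Masy] at key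
  simp only [LinearEquiv.finrank_map_inf_map] at key
  omega

theorem stmt6 {m : ℕ} (hm : 0 < m) (Q : Matrix (Fin m ⊕ Fin m) (Fin m ⊕ Fin m) ℂ)
    (hQ : Qᴴ = Q) (hQ2 : Q * Q = Q) :
    Module.finrank ℂ ↥(LinearMap.range Q.mulVecLin ⊓ Masy m) +
      Module.finrank ℂ ↥(LinearMap.ker Q.mulVecLin ⊓ Masy m) =
    Module.finrank ℂ ↥(LinearMap.range Q.mulVecLin ⊓ Msy m) +
      Module.finrank ℂ ↥(LinearMap.ker Q.mulVecLin ⊓ Msy m) :=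
  stmt6_general Q hQ
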